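/- arXiv:1711.02763 — 3 statements merged into one kernel-verified Lean document; each statement's English description precedes it below -/
import Mathlib

section
/- In a tricolored triangulation of a closed 4-manifold, the pentachora are partitioned into pairs (double-pentachora): the map sending each pentachoron σ to the pentachoron σ' sharing with σ its unique two-colored facet is a fixed-point-free involution on the set of pentachora. In particular, the number of pentachora in a tricolored triangulation is even. -/
/-- The facet of a pentachoron obtained by omitting vertex `i` is two-colored if
the colors of its four vertices form a set of cardinality at most 2. -/
def TwoColoredFacet (c : Fin 5 → Fin 3) (i : Fin 5) : Prop :=
  ((Finset.univ.erase i).image c).card ≤ 2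

/-- A pentachoron coloring is tricolored if its five vertices have color multiset
`{2,2,1}` over the three colors. -/
def IsTricoloredPentachoron (c : Fin 5 → Fin 3) : Prop :=
  ∃ k : Fin 3, (Finset.univ.filter fun v : Fin 5 => c v = k).card = 1 ∧
    ∀ j : Fin 3, j ≠ k → (Finset.univ.filter fun v : Fin 5 => c v = j).card = 2

instance : ∀ c i, Decidable (TwoColoredFacet c i) := fun c i => by
  unfold TwoColoredFacet; infer_instance

instance : DecidablePred IsTricoloredPentachoron := fun c => by
  unfold IsTricoloredPentachoron; infer_instance

set_option maxRecDepth 10000 in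
lemma exists_unique_tcf :
    ∀ c : Fin 5 → Fin 3, IsTricoloredPentachoron c →
      ∃ i, TwoColoredFacet c i ∧ ∀ j, TwoColoredFacet c j → j = i := by
  decide

lemma even_card_of_inv {α : Type*} [DecidableEq α] (s : Finset α) (g : α → α)
    (hmem : ∀ a ∈ s, g a ∈ s) (hinv : ∀ a ∈ s, g (g a) = a)
    (hnf : ∀ a ∈ s, g a ≠ a) : Even s.card := by
  induction s using Finset.strongInductionOn with
  | _ s ih =>
    rcases s.eq_empty_or_nonempty with rfl | ⟨a, ha⟩
    · simp
    · have hga : g a ∈ s := hmem a ha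
      have hpair : ({a, g a} : Finset α) ⊆ s := by
        intro x hx; simp at hx; rcases hx with rfl | rfl <;> assumption
      set t := s \ {a, g a} with ht
      have hts : t ⊂ s := by
        refine Finset.ssubset_iff_of_subset (Finset.sdiff_subset) |>.mpr ⟨a, ha, by simp [ht]⟩
      have hcard : s.card = t.card + 2 := by
        have : t.card = s.card - 2 := by
          rw [ht, Finset.card_sdiff_of_subset hpair, Finset.card_pair (Ne.symm (hnf a ha))]
        have h2le : ({a, g a} : Finset α).card ≤ s.card := Finset.card_le_card hpair
        rw [Finset.card_pair (Ne.symm (hnf a ha))] at h2le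
        omega
      have htmem : ∀ b ∈ t, g b ∈ t := by
        intro b hb
        rw [ht, Finset.mem_sdiff] at hb ⊢
        obtain ⟨hbs, hbp⟩ := hb
        simp only [Finset.mem_insert, Finset.mem_singleton] at hbp
        refine ⟨hmem b hbs, ?_⟩
        simp only [Finset.mem_insert, Finset.mem_singleton]
        push_neg at hbp ⊢
        constructor
        · intro h; exact hbp.2 (by rw [← hinv b hbs, h])
        · intro h
          have := congrArg g h
          rw [hinv b hbs, hinv a ha] at this
          exact hbp.1 this
      have := ih t hts (fun b hb => htmem b hb)
        (fun b hb => hinv b (Finset.mem_sdiff.mp hb).1)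
        (fun b hb => hnf b (Finset.mem_sdiff.mp hb).1)
      rw [hcard]
      exact this.add (by decide)

/-- In a tricolored triangulation of a closed 4-manifold — modelled combinatorially
by a finite set `P` of pentachora with tricolored vertex colorings and a face
pairing `glue` on the facets `(σ, i)` which is a fixed-point-free (no facet is
glued to itself) involution preserving the property of being two-colored — the
map sending each pentachoron `σ` to the pentachoron `σ'` glued to the unique
two-colored facet of `σ` is a fixed-point-free involution on `P`.  In particular
the number of pentachora is even. -/
theorem double_pentachoron_decomposition (P : Type*) [Fintype P]
    (color : P → Fin 5 → Fin 3)
    (htri : ∀ σ : P, IsTricoloredPentachoron (color σ))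
    (glue : P × Fin 5 → P × Fin 5)
    (hinv : Function.Involutive glue)
    (hnf : ∀ x : P × Fin 5, glue x ≠ x)
    (h2c : ∀ x : P × Fin 5,
      (TwoColoredFacet (color x.1) x.2 ↔ TwoColoredFacet (color (glue x).1) (glue x).2)) :
    ∃ g : P → P,
      (∀ σ : P, ∃ i : Fin 5, TwoColoredFacet (color σ) i ∧ (glue (σ, i)).1 = g σ) ∧
      (∀ σ : P, g σ ≠ σ) ∧ Function.Involutive g ∧
      Even (Fintype.card P) := by
  classical
  have hu : ∀ σ : P, ∃ i, TwoColoredFacet (color σ) i ∧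
      ∀ j, TwoColoredFacet (color σ) j → j = i :=
    fun σ => exists_unique_tcf (color σ) (htri σ)
  let u : P → Fin 5 := fun σ => (hu σ).choose
  have hu1 : ∀ σ, TwoColoredFacet (color σ) (u σ) := fun σ => (hu σ).choose_spec.1
  have hu2 : ∀ σ i, TwoColoredFacet (color σ) i → i = u σ := fun σ => (hu σ).choose_spec.2
  let g : P → P := fun σ => (glue (σ, u σ)).1
  -- key: glue (σ, u σ) = (g σ, u (g σ))
  have key : ∀ σ, glue (σ, u σ) = (g σ, u (g σ)) := by
    intro σ
    have h2 : TwoColoredFacet (color (glue (σ, u σ)).1) (glue (σ, u σ)).2 :=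
      (h2c (σ, u σ)).mp (hu1 σ)
    have := hu2 _ _ h2
    ext
    · rfl
    · exact Fin.val_eq_of_eq this
  have hgnf : ∀ σ, g σ ≠ σ := by
    intro σ h
    apply hnf (σ, u σ)
    rw [key σ, h]
  have hginv : Function.Involutive g := by
    intro σ
    have : glue (g σ, u (g σ)) = (σ, u σ) := by rw [← key σ]; exact hinv _
    show (glue (g σ, u (g σ))).1 = σ
    rw [this]
  refine ⟨g, fun σ => ⟨u σ, hu1 σ, rfl⟩, hgnf, hginv, ?_⟩
  exact even_card_of_inv Finset.univ g (fun a _ => Finset.mem_univ _)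
    (fun a _ => hginv a) (fun a _ => hgnf a)
end

section
/- The preimage under μ[z₀:z₁:z₂] = (|z₀|,|z₁|,|z₂|)/Σ|zₖ| of the set {x ∈ Δ² : x₀ = x₁ ≥ x₂} is {[1:w₁:w₂] : |w₁| = 1, |w₂| ≤ 1}, which is homeomorphic to the solid torus S¹ × D². -/
/-!
The moment map only sees the moduli `|zᵢ|`, so the cube condition `x₀ = x₁ ≥ x₂` on `μ[z]` reads
`|z₀| = |z₁| ≥ |z₂|`. This forces `z₀ ≠ 0`, and normalizing `z₀ = 1` gives exactly the points
`[1 : w₁ : w₂]` with `|w₁| = 1` and `|w₂| ≤ 1`. The chart `(w₁, w₂) ↦ [1 : w₁ : w₂]` is continuous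
and injective, and `ℂP²` is Hausdorff because `[v] ↦ v v* / |v|²` embeds it into matrices; so the
chart restricted to the compact set `S¹ × D²` is a homeomorphism onto its image.
-/

open scoped LinearAlgebra.Projectivization
open Projectivization

/-- The complex projective plane `ℂP²` carries the quotient topology from `ℂ³ \ {0}`. -/
noncomputable instance : TopologicalSpace (ℙ ℂ (Fin 3 → ℂ)) := by unfold Projectivization; infer_instance

open Matrix

section ProjectionMatrix

open scoped ComplexOrder

variable {𝕜 ι : Type*} [RCLike 𝕜] [Fintype ι]

noncomputable def projectionMatrix (v : ι → 𝕜) : Matrix ι ι 𝕜 :=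
  (star v ⬝ᵥ v)⁻¹ • vecMulVec v (star v)

theorem projectionMatrix_mulVec (v w : ι → 𝕜) :
    projectionMatrix v *ᵥ w = ((star v ⬝ᵥ v)⁻¹ * (star v ⬝ᵥ w)) • v := by
  rw [projectionMatrix, smul_mulVec, vecMulVec_mulVec, op_smul_eq_smul, smul_smul]

theorem projectionMatrix_smul (v : ι → 𝕜) {a : 𝕜} (ha : a ≠ 0) :
    projectionMatrix (a • v) = projectionMatrix v := by
  have hstar : star a ≠ 0 := star_ne_zero.mpr ha
  simp only [projectionMatrix, star_smul, smul_vecMulVec, vecMulVec_smul, smul_dotProduct,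
    dotProduct_smul, smul_smul, smul_eq_mul]
  congr 1
  field_simp

theorem projectionMatrix_mulVec_self {v : ι → 𝕜} (hv : v ≠ 0) : projectionMatrix v *ᵥ v = v := by
  rw [projectionMatrix_mulVec, inv_mul_cancel₀ (dotProduct_star_self_eq_zero.not.mpr hv), one_smul]

theorem exists_smul_eq_of_projectionMatrix_eq {v w : ι → 𝕜} (hv : v ≠ 0)
    (h : projectionMatrix v = projectionMatrix w) : ∃ a : 𝕜, a • w = v := by
  rw [← projectionMatrix_mulVec_self hv, h, projectionMatrix_mulVec]
  exact ⟨_, rfl⟩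

theorem continuousOn_projectionMatrix :
    ContinuousOn (projectionMatrix (𝕜 := 𝕜) (ι := ι)) {v | v ≠ 0} := by
  have hinv : ContinuousOn (fun v : ι → 𝕜 => (star v ⬝ᵥ v)⁻¹) {v | v ≠ 0} :=
    (continuous_star.dotProduct continuous_id).continuousOn.inv₀
      fun v hv => dotProduct_star_self_eq_zero.not.mpr hv
  exact hinv.smul (continuous_id.matrix_vecMulVec continuous_star).continuousOn

noncomputable def projectivizationProjectionMatrix : ℙ 𝕜 (ι → 𝕜) → Matrix ι ι 𝕜 :=
  Projectivization.lift (fun v => projectionMatrix v.1) fun v w t hvw => by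
    have ht : t ≠ 0 := by rintro rfl; exact v.2 (by rw [hvw, zero_smul])
    rw [hvw, projectionMatrix_smul _ ht]

theorem projectivizationProjectionMatrix_injective :
    Function.Injective (projectivizationProjectionMatrix (𝕜 := 𝕜) (ι := ι)) := by
  intro P Q
  induction P using Projectivization.ind with | h v hv =>
  induction Q using Projectivization.ind with | h w hw =>
  intro h
  exact (mk_eq_mk_iff' 𝕜 v w hv hw).mpr (exists_smul_eq_of_projectionMatrix_eq hv h)

end ProjectionMatrix

theorem continuous_projectivizationProjectionMatrix :
    Continuous (projectivizationProjectionMatrix : ℙ ℂ (Fin 3 → ℂ) → _) :=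
  Continuous.quotient_lift
    (continuousOn_iff_continuous_domRestrict.mp continuousOn_projectionMatrix) _

instance : T2Space (ℙ ℂ (Fin 3 → ℂ)) :=
  .of_injective_continuous projectivizationProjectionMatrix_injective
    continuous_projectivizationProjectionMatrix

section MomentMap

variable {𝕜 ι : Type*} [NormedField 𝕜] [Fintype ι]

noncomputable def momentMap (v : ι → 𝕜) : ι → ℝ := fun i => ‖v i‖ / ∑ j, ‖v j‖

theorem momentMap_smul (v : ι → 𝕜) {a : 𝕜} (ha : a ≠ 0) : momentMap (a • v) = momentMap v := by
  ext i
  simp only [momentMap, Pi.smul_apply, smul_eq_mul, norm_mul, ← Finset.mul_sum]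
  exact mul_div_mul_left _ _ (norm_ne_zero_iff.mpr ha)

theorem momentMap_rep (v : ι → 𝕜) (hv : v ≠ 0) : momentMap (mk 𝕜 v hv).rep = momentMap v := by
  obtain ⟨a, ha⟩ := exists_smul_eq_mk_rep 𝕜 v hv
  rw [← ha, Units.smul_def, momentMap_smul v a.ne_zero]

theorem sum_norm_pos_of_ne_zero {v : ι → 𝕜} (hv : v ≠ 0) : 0 < ∑ j, ‖v j‖ := by
  obtain ⟨k, hk⟩ := Function.ne_iff.mp hv
  exact Finset.sum_pos' (fun _ _ => norm_nonneg _) ⟨k, Finset.mem_univ _, norm_pos_iff.mpr hk⟩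

end MomentMap

section AffineChart

variable {𝕜 : Type*} [Field 𝕜]

theorem vec_one_ne_zero (u w : 𝕜) : ![1, u, w] ≠ 0 :=
  fun h => one_ne_zero (congrFun h 0)

def affineChart (p : 𝕜 × 𝕜) : ℙ 𝕜 (Fin 3 → 𝕜) := mk 𝕜 ![1, p.1, p.2] (vec_one_ne_zero _ _)

theorem affineChart_injective : Function.Injective (affineChart (𝕜 := 𝕜)) := by
  rintro ⟨u, w⟩ ⟨u', w'⟩ h
  obtain ⟨a, ha⟩ := (mk_eq_mk_iff' 𝕜 _ _ _ _).mp h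
  have ha1 : a = 1 := by simpa using congrFun ha 0
  simpa [ha1] using ha.symm

theorem mk_eq_affineChart {v : Fin 3 → 𝕜} (hv : v ≠ 0) (hv0 : v 0 ≠ 0) :
    mk 𝕜 v hv = affineChart (v 1 / v 0, v 2 / v 0) := by
  refine (mk_eq_mk_iff' 𝕜 _ _ _ _).mpr ⟨v 0, ?_⟩
  ext j
  fin_cases j <;> simp [mul_div_cancel₀ _ hv0]

end AffineChart

theorem continuous_affineChart : Continuous (affineChart : ℂ × ℂ → ℙ ℂ (Fin 3 → ℂ)) := by
  refine continuous_quot_mk.comp (Continuous.subtype_mk (continuous_pi fun i => ?_) _)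
  fin_cases i
  · exact continuous_const
  · exact continuous_fst
  · exact continuous_snd

theorem isClosedEmbedding_affineChart_sphere_closedBall :
    Topology.IsClosedEmbedding fun p : Metric.sphere (0 : ℂ) 1 × Metric.closedBall (0 : ℂ) 1 =>
      affineChart ((p.1 : ℂ), (p.2 : ℂ)) :=
  (continuous_affineChart.comp (by fun_prop)).isClosedEmbedding <|
    affineChart_injective.comp (Subtype.val_injective.prodMap Subtype.val_injective)

theorem range_affineChart_sphere_closedBall :
    Set.range (fun p : Metric.sphere (0 : ℂ) 1 × Metric.closedBall (0 : ℂ) 1 =>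
      affineChart ((p.1 : ℂ), (p.2 : ℂ))) =
      {P | ∃ u w : ℂ, ‖u‖ = 1 ∧ ‖w‖ ≤ 1 ∧ P = affineChart (u, w)} := by
  ext P
  constructor
  · rintro ⟨⟨⟨u, hu⟩, ⟨w, hw⟩⟩, rfl⟩
    exact ⟨u, w, mem_sphere_zero_iff_norm.mp hu, mem_closedBall_zero_iff.mp hw, rfl⟩
  · rintro ⟨u, w, hu, hw, rfl⟩
    exact ⟨(⟨u, mem_sphere_zero_iff_norm.mpr hu⟩, ⟨w, mem_closedBall_zero_iff.mpr hw⟩), rfl⟩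

section InteriorOneCube

def interiorOneCube : Set (Fin 3 → ℝ) :=
  {x | (∀ i, 0 ≤ x i) ∧ ∑ i, x i = 1 ∧ x 0 = x 1 ∧ x 2 ≤ x 0}

variable {𝕜 : Type*} [NormedField 𝕜]

theorem momentMap_mem_interiorOneCube_iff {v : Fin 3 → 𝕜} (hv : v ≠ 0) :
    momentMap v ∈ interiorOneCube ↔ ‖v 0‖ = ‖v 1‖ ∧ ‖v 2‖ ≤ ‖v 0‖ := by
  have hT := sum_norm_pos_of_ne_zero hv
  simp only [interiorOneCube, momentMap, Set.mem_ofPred_eq, div_left_inj' hT.ne',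
    div_le_div_iff_of_pos_right hT, ← Finset.sum_div, div_self hT.ne']
  exact ⟨fun h => h.2.2, fun h => ⟨fun i => div_nonneg (norm_nonneg _) hT.le, trivial, h⟩⟩

theorem momentMap_mem_interiorOneCube_iff_exists {v : Fin 3 → 𝕜} (hv : v ≠ 0) :
    momentMap v ∈ interiorOneCube ↔
      ∃ u w : 𝕜, ‖u‖ = 1 ∧ ‖w‖ ≤ 1 ∧ mk 𝕜 v hv = affineChart (u, w) := by
  constructor
  · rw [momentMap_mem_interiorOneCube_iff hv]
    rintro ⟨h01, h20⟩
    have hv0 : v 0 ≠ 0 := fun h0 => hv <| by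
      have h1 : v 1 = 0 := by simpa [h0] using h01.symm
      have h2 : v 2 = 0 := by simpa [h0] using h20
      ext j
      fin_cases j <;> simp [h0, h1, h2]
    have hn0 : 0 < ‖v 0‖ := norm_pos_iff.mpr hv0
    refine ⟨v 1 / v 0, v 2 / v 0, ?_, ?_, mk_eq_affineChart hv hv0⟩
    · rw [norm_div, ← h01, div_self hn0.ne']
    · rwa [norm_div, div_le_one hn0]
  · rintro ⟨u, w, hu, hw, h⟩
    obtain ⟨a, rfl⟩ := (mk_eq_mk_iff' 𝕜 _ _ _ _).mp h
    have ha : a ≠ 0 := by rintro rfl; exact hv (zero_smul _ _)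
    rw [momentMap_smul _ ha, momentMap_mem_interiorOneCube_iff (vec_one_ne_zero u w)]
    simp [hu, hw]

theorem momentMap_rep_preimage_interiorOneCube :
    (fun P : ℙ 𝕜 (Fin 3 → 𝕜) => momentMap P.rep) ⁻¹' interiorOneCube =
      {P | ∃ u w : 𝕜, ‖u‖ = 1 ∧ ‖w‖ ≤ 1 ∧ P = affineChart (u, w)} := by
  ext P
  induction P using Projectivization.ind with | h v hv =>
  rw [Set.mem_preimage, momentMap_rep, momentMap_mem_interiorOneCube_iff_exists hv]
  rfl

end InteriorOneCube

/-- The preimage under the moment map `μ[z₀:z₁:z₂] = (|z₀|,|z₁|,|z₂|)/Σ|zₖ|` of the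
interior 1-cube `{x ∈ Δ² : x₀ = x₁ ≥ x₂}` of the dual cubical structure is the set
`{[1:w₁:w₂] : |w₁| = 1, |w₂| ≤ 1}`, which is homeomorphic to the solid torus
`S¹ × D²`. -/
theorem moment_map_preimage_interior_one_cube
    (μ : ℙ ℂ (Fin 3 → ℂ) → (Fin 3 → ℝ))
    (hμ : ∀ P : ℙ ℂ (Fin 3 → ℂ), μ P = fun i => ‖P.rep i‖ / ∑ j, ‖P.rep j‖) :
    μ ⁻¹' {x : Fin 3 → ℝ | (∀ i, 0 ≤ x i) ∧ ∑ i, x i = 1 ∧ x 0 = x 1 ∧ x 2 ≤ x 0} =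
      {P : ℙ ℂ (Fin 3 → ℂ) | ∃ (w₁ w₂ : ℂ) (h : ![1, w₁, w₂] ≠ 0),
        ‖w₁‖ = 1 ∧ ‖w₂‖ ≤ 1 ∧ P = Projectivization.mk ℂ ![1, w₁, w₂] h} ∧
    Nonempty ((μ ⁻¹' {x : Fin 3 → ℝ | (∀ i, 0 ≤ x i) ∧ ∑ i, x i = 1 ∧ x 0 = x 1 ∧ x 2 ≤ x 0} :
        Set (ℙ ℂ (Fin 3 → ℂ))) ≃ₜ
      (Metric.sphere (0 : ℂ) 1 × Metric.closedBall (0 : ℂ) 1)) := by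
  obtain rfl : μ = fun P => momentMap P.rep := funext hμ
  have hpreimage := momentMap_rep_preimage_interiorOneCube (𝕜 := ℂ)
  refine ⟨hpreimage.trans (Set.ext fun P => ?_), ⟨?_⟩⟩
  · exact ⟨fun ⟨u, w, hu, hw, h⟩ => ⟨u, w, vec_one_ne_zero u w, hu, hw, h⟩,
      fun ⟨u, w, _, hu, hw, h⟩ => ⟨u, w, hu, hw, h⟩⟩
  · rw [← range_affineChart_sphere_closedBall] at hpreimage
    exact (Homeomorph.setCongr hpreimage).trans
      isClosedEmbedding_affineChart_sphere_closedBall.isEmbedding.toHomeomorph.symm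
end

section
/- Let μ be the moment map of ℂP² (inducing its standard trisection, whose central surface is the preimage of the barycenter of the moment polytope). Then the preimage of the barycenter under μ is connected and has the homotopy type of S¹ × S¹; in particular it is not simply connected. -/
open scoped LinearAlgebra.Projectivization
open Projectivization

namespace CentralSurfaceAux

open Complex Set

noncomputable section


abbrev Circ : Type := Metric.sphere (0 : ℂ) 1

def circPt : Circ := ⟨1, by simp⟩

lemma circ_norm (z : Circ) : ‖(z : ℂ)‖ = 1 := mem_sphere_zero_iff_norm.1 z.2

lemma circ_ne_zero (z : Circ) : (z : ℂ) ≠ 0 := by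
  intro h; have := circ_norm z; rw [h] at this; simp at this

def circLoop : Path circPt circPt where
  toFun t := ⟨Complex.exp ((2 * Real.pi * t : ℝ) * I), by
    rw [mem_sphere_zero_iff_norm]
    exact Complex.norm_exp_ofReal_mul_I _⟩
  continuous_toFun := by
    apply Continuous.subtype_mk
    fun_prop
  source' := by
    ext1
    show Complex.exp _ = (1:ℂ)
    norm_num
  target' := by
    ext1
    show Complex.exp _ = (1:ℂ)
    norm_num [Complex.exp_two_pi_mul_I]

lemma circLoop_apply (t : unitInterval) :
    (circLoop t : ℂ) = Complex.exp ((2 * Real.pi * t : ℝ) * I) := rfl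

-- re of ratio of two close unit vectors
lemma half_lt_re_div {u v : ℂ} (hu : ‖u‖ = 1) (hv : ‖v‖ = 1) (h : dist v u < 1) :
    1 / 2 < (v / u).re := by
  have hu0 : u ≠ 0 := by intro h0; rw [h0] at hu; simp at hu
  have hnsq : Complex.normSq u = 1 := by
    rw [Complex.normSq_eq_norm_sq]; rw [hu]; norm_num
  have hdiv : v / u = v * (starRingEnd ℂ) u := by
    rw [div_eq_mul_inv, Complex.inv_def, hnsq]
    simp
  have h1 : u.re ^ 2 + u.im ^ 2 = 1 := by
    have := hnsq; rw [Complex.normSq_apply] at this; nlinarith [this]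
  have h2 : v.re ^ 2 + v.im ^ 2 = 1 := by
    have : Complex.normSq v = 1 := by
      rw [Complex.normSq_eq_norm_sq, hv]; norm_num
    rw [Complex.normSq_apply] at this; nlinarith [this]
  have h3 : (v.re - u.re) ^ 2 + (v.im - u.im) ^ 2 < 1 := by
    have hd : dist v u = Real.sqrt ((v.re - u.re) ^ 2 + (v.im - u.im) ^ 2) := by
      rw [Complex.dist_eq, Complex.norm_def,
        Complex.normSq_apply]
      simp [Complex.sub_re, Complex.sub_im]
      ring_nf
    nlinarith [Real.sq_sqrt (by positivity : (0:ℝ) ≤ (v.re - u.re) ^ 2 + (v.im - u.im) ^ 2),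
      Real.sqrt_nonneg ((v.re - u.re) ^ 2 + (v.im - u.im) ^ 2), h, hd]
  rw [hdiv]
  simp [Complex.mul_re, Complex.conj_re, Complex.conj_im]
  nlinarith
lemma circLoop_not_nullhomotopic : ¬ circLoop.Homotopic (Path.refl circPt) := by
  rintro ⟨H⟩
  set pr : ℝ → unitInterval := Set.projIcc 0 1 zero_le_one with hpr
  set G : ℝ × ℝ → ℂ := fun p => (H (pr p.1, pr p.2) : ℂ) with hG
  have hGnorm : ∀ p, ‖G p‖ = 1 := fun p => circ_norm _
  have hGne : ∀ p, G p ≠ 0 := by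
    intro p h0
    have := hGnorm p; rw [h0] at this; simp at this
  have hGuc : UniformContinuous G := by
    have h1 : UniformContinuous (fun q : unitInterval × unitInterval => (H q : ℂ)) :=
      CompactSpace.uniformContinuous_of_continuous
        (continuous_subtype_val.comp H.continuous)
    have h2 : UniformContinuous (fun p : ℝ × ℝ => (pr p.1, pr p.2)) :=
      ((LipschitzWith.projIcc zero_le_one).uniformContinuous.comp uniformContinuous_fst).prodMk
        ((LipschitzWith.projIcc zero_le_one).uniformContinuous.comp uniformContinuous_snd)
    exact h1.comp h2
  obtain ⟨δ, hδ0, hδ⟩ := Metric.uniformContinuous_iff.1 hGuc 1 one_pos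
  obtain ⟨n0, hn0⟩ := exists_nat_one_div_lt hδ0
  set n : ℕ := n0 + 2 with hn
  have hnpos : (0:ℝ) < n := by positivity
  have hmesh : (1:ℝ) / n < δ := by
    refine lt_of_le_of_lt ?_ hn0
    apply div_le_div_of_nonneg_left one_pos.le (by positivity)
    push_cast; linarith [show (n:ℝ) = n0 + 2 by rw [hn]; push_cast; ring]
  have hclose : ∀ (s t t' : ℝ), |t - t'| ≤ 1 / n → dist (G (s, t)) (G (s, t')) < 1 := by
    intro s t t' h
    apply hδ
    rw [Prod.dist_eq]
    simp only [dist_self]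
    have : dist t t' < δ := lt_of_le_of_lt (by rwa [Real.dist_eq]) hmesh
    simpa [max_lt_iff, hδ0] using this
  have hre : ∀ (s : ℝ) (i : ℕ), 1/2 < (G (s, ((i+1:ℕ):ℝ)/n) / G (s, (i:ℝ)/n)).re := by
    intro s i
    apply half_lt_re_div (hGnorm _) (hGnorm _)
    apply hclose
    push_cast
    rw [div_sub_div_same, add_sub_cancel_left]
    exact le_of_eq (_root_.abs_of_nonneg (by positivity))
  have hG0 : ∀ s : ℝ, G (s, 0) = 1 := by
    intro s
    show (H (pr s, pr 0) : ℂ) = 1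
    have : pr 0 = 0 := by simp [hpr]
    rw [this, Path.Homotopy.source]
    rfl
  have hG1 : ∀ s : ℝ, G (s, 1) = 1 := by
    intro s
    show (H (pr s, pr 1) : ℂ) = 1
    have : pr 1 = 1 := by simp [hpr]
    rw [this, Path.Homotopy.target]
    rfl
  set g : ℝ → ℝ := fun s =>
    ∑ i ∈ Finset.range n, Complex.arg (G (s, ((i+1:ℕ):ℝ)/n) / G (s, (i:ℝ)/n)) with hg
  have hgcont : Continuous g := by
    apply continuous_finset_sum
    intro i _
    rw [continuous_iff_continuousAt]
    intro s
    have hrc : ContinuousAt (fun s : ℝ => G (s, ((i+1:ℕ):ℝ)/n) / G (s, (i:ℝ)/n)) s := by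
      apply ContinuousAt.div
      · exact (hGuc.continuous.comp (continuous_id.prodMk continuous_const)).continuousAt
      · exact (hGuc.continuous.comp (continuous_id.prodMk continuous_const)).continuousAt
      · exact hGne _
    exact (Complex.continuousAt_arg (Or.inl (by linarith [hre s i]))).comp hrc
  have hint : ∀ s : ℝ, ∃ k : ℤ, g s = 2 * Real.pi * k := by
    intro s
    have hcoe : ((g s : ℝ) : Real.Angle) = 0 := by
      have e1 : ((g s : ℝ) : Real.Angle)
          = ∑ i ∈ Finset.range n,
              ((Complex.arg (G (s, ((i+1:ℕ):ℝ)/n) / G (s, (i:ℝ)/n)) : ℝ) : Real.Angle) := by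
        rw [hg]
        exact map_sum Real.Angle.coeHom _ _
      rw [e1]
      have e2 : ∀ i ∈ Finset.range n,
          ((Complex.arg (G (s, ((i+1:ℕ):ℝ)/n) / G (s, (i:ℝ)/n)) : ℝ) : Real.Angle)
            = (fun j : ℕ => ((Complex.arg (G (s, (j:ℝ)/n)) : ℝ) : Real.Angle)) (i+1)
              - (fun j : ℕ => ((Complex.arg (G (s, (j:ℝ)/n)) : ℝ) : Real.Angle)) i := by
        intro i _
        exact Complex.arg_div_coe_angle (hGne _) (hGne _)
      rw [Finset.sum_congr rfl e2,
        Finset.sum_range_sub (fun j : ℕ => ((Complex.arg (G (s, (j:ℝ)/n)) : ℝ) : Real.Angle)) n]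
      have hnn : ((n:ℝ))/n = 1 := div_self (ne_of_gt hnpos)
      have h0n : ((0:ℕ):ℝ)/n = 0 := by simp
      rw [hnn, h0n, hG1, hG0, sub_self]
    rw [← Real.Angle.coe_zero, Real.Angle.angle_eq_iff_two_pi_dvd_sub] at hcoe
    obtain ⟨k, hk⟩ := hcoe
    exact ⟨k, by linarith [hk]⟩
  have hgs1 : g 1 = 0 := by
    simp only [hg]
    apply Finset.sum_eq_zero
    intro i _
    have hval : ∀ t : ℝ, G (1, t) = ((Path.refl circPt) (pr t) : ℂ) := by
      intro t
      show (H (pr 1, pr t) : ℂ) = _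
      have : pr 1 = 1 := by simp [hpr]
      rw [this]
      congr 1
      exact H.apply_one _
    have h1 : G (1, ((i+1:ℕ):ℝ)/n) = 1 := by rw [hval]; rfl
    have h2 : G (1, (i:ℝ)/n) = 1 := by rw [hval]; rfl
    rw [h1, h2, div_one, Complex.arg_one]
  have hgs0 : g 0 = 2 * Real.pi := by
    have hval : ∀ j : ℕ, j ≤ n → G (0, (j:ℝ)/n) =
        Complex.exp ((2 * Real.pi * ((j:ℝ)/n) : ℝ) * Complex.I) := by
      intro j hj
      have hmem : (j:ℝ)/n ∈ Set.Icc (0:ℝ) 1 := by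
        constructor
        · positivity
        · rw [div_le_one hnpos]; exact_mod_cast hj
      show (H (pr 0, pr ((j:ℝ)/n)) : ℂ) = _
      have h0 : pr 0 = 0 := by simp [hpr]
      rw [h0]
      have happ : H (0, pr ((j:ℝ)/n)) = circLoop (pr ((j:ℝ)/n)) := H.apply_zero _
      rw [happ, circLoop_apply]
      congr 2
      rw [hpr]
      rw [Set.projIcc_of_mem zero_le_one hmem]
    simp only [hg]
    have hterm : ∀ i ∈ Finset.range n,
        Complex.arg (G (0, ((i+1:ℕ):ℝ)/n) / G (0, (i:ℝ)/n)) = 2 * Real.pi / n := by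
      intro i hi
      rw [Finset.mem_range] at hi
      rw [hval (i+1) (by omega), hval i (by omega), ← Complex.exp_sub]
      have harg : (((2 * Real.pi * (((i+1:ℕ):ℝ)/n)) : ℝ) : ℂ) * Complex.I
          - (((2 * Real.pi * (((i:ℕ):ℝ)/n)) : ℝ) : ℂ) * Complex.I
          = ((2 * Real.pi / n : ℝ) : ℂ) * Complex.I := by
        push_cast
        have hne : ((n:ℂ)) ≠ 0 := by exact_mod_cast ne_of_gt hnpos
        field_simp
        ring
      rw [harg]
      rw [Complex.arg_exp_mul_I, toIocMod_eq_self]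
      constructor
      · have h1 : (0:ℝ) < 2 * Real.pi / n := by positivity
        linarith [Real.pi_pos]
      · rw [show -Real.pi + 2 * Real.pi = Real.pi by ring]
        rw [div_le_iff₀ hnpos]
        nlinarith [Real.pi_pos, show (2:ℝ) ≤ n by exact_mod_cast Nat.le_add_left 2 n0]
    rw [Finset.sum_congr rfl hterm, Finset.sum_const, Finset.card_range, nsmul_eq_mul,
      mul_div_assoc']
    rw [mul_comm ((n:ℝ)) (2 * Real.pi), mul_div_assoc, div_self (ne_of_gt hnpos), mul_one]
  have hivt : Real.pi ∈ g '' Set.Icc (0:ℝ) 1 := by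
    apply intermediate_value_Icc' zero_le_one hgcont.continuousOn
    rw [hgs0, hgs1]
    constructor
    · linarith [Real.pi_pos]
    · linarith [Real.pi_pos]
  obtain ⟨s, -, hs⟩ := hivt
  obtain ⟨k, hk⟩ := hint s
  rw [hs] at hk
  have h2k : (2 * k : ℝ) = 1 := by
    have hz : Real.pi * (2 * (k:ℝ) - 1) = 0 := by linear_combination -hk
    rcases mul_eq_zero.1 hz with h | h
    · exact absurd h Real.pi_ne_zero
    · linarith
  have : (2 * k : ℤ) = 1 := by exact_mod_cast h2k
  omega

lemma simplyConnected_of_homotopyEquiv {X Y : Type} [TopologicalSpace X] [TopologicalSpace Y]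
    (e : ContinuousMap.HomotopyEquiv X Y) (h : SimplyConnectedSpace X) :
    SimplyConnectedSpace Y := by
  constructor
  obtain ⟨u⟩ := h.equiv_unit
  exact ⟨(FundamentalGroupoidFunctor.equivOfHomotopyEquiv
    (X := TopCat.of Y) (Y := TopCat.of X) e.symm).trans u⟩

lemma torus_not_simplyConnected : ¬ SimplyConnectedSpace (Circ × Circ) := by
  intro h
  apply circLoop_not_nullhomotopic
  have h1 : (circLoop.prod (Path.refl circPt)).Homotopic
      ((Path.refl circPt).prod (Path.refl circPt)) :=
    SimplyConnectedSpace.paths_homotopic _ _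
  have h2 := h1.map ⟨Prod.fst, continuous_fst⟩
  convert h2 using 2 <;> ext t <;> rfl




abbrev CP2 := ℙ ℂ (Fin 3 → ℂ)

def centralSet : Set CP2 := {P | ∀ i, 3 * ‖P.rep i‖ = ∑ j, ‖P.rep j‖}


-- vectors
def torusVec (w : Circ × Circ) : Fin 3 → ℂ := ![1, w.1, w.2]

lemma torusVec_ne (w : Circ × Circ) : torusVec w ≠ 0 := by
  intro h
  have := congrFun h 0
  simp [torusVec] at this

def torusToCP2 (w : Circ × Circ) : CP2 :=
  Projectivization.mk ℂ (torusVec w) (torusVec_ne w)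

lemma continuous_torusToCP2 : Continuous torusToCP2 := by
  unfold torusToCP2 Projectivization.mk
  apply Continuous.comp continuous_quotient_mk'
  apply Continuous.subtype_mk
  apply continuous_pi
  intro i
  fin_cases i
  · simpa [torusVec] using continuous_const
  · have h : Continuous (fun a : Circ × Circ => (a.1 : ℂ)) := continuous_subtype_val.comp continuous_fst
    simpa [torusVec] using h
  · have h : Continuous (fun a : Circ × Circ => (a.2 : ℂ)) := continuous_subtype_val.comp continuous_snd
    simpa [torusVec] using h

def ψ : {v : Fin 3 → ℂ // v ≠ 0} → ℂ × ℂ := fun v =>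
  ((v.1 1 * (starRingEnd ℂ) (v.1 0)) / ((∑ j, Complex.normSq (v.1 j) : ℝ) : ℂ),
   (v.1 2 * (starRingEnd ℂ) (v.1 0)) / ((∑ j, Complex.normSq (v.1 j) : ℝ) : ℂ))

lemma sum_normSq_pos (v : {v : Fin 3 → ℂ // v ≠ 0}) : 0 < ∑ j, Complex.normSq (v.1 j) := by
  obtain ⟨i, hi⟩ : ∃ i, v.1 i ≠ 0 := by
    by_contra h; push_neg at h; exact v.2 (funext h)
  exact Finset.sum_pos' (fun j _ => Complex.normSq_nonneg _)
    ⟨i, Finset.mem_univ _, Complex.normSq_pos.2 hi⟩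

lemma ψ_smul (a b : {v : Fin 3 → ℂ // v ≠ 0}) (t : ℂ)
    (h : (a : Fin 3 → ℂ) = t • (b : Fin 3 → ℂ)) : ψ a = ψ b := by
  have ht : t ≠ 0 := by
    rintro rfl
    apply a.2
    rw [h]  -- a = 0 • b
    simp
  have htc : t * (starRingEnd ℂ) t ≠ 0 := by
    simp [ht]
  have hden : ∑ j, Complex.normSq (a.1 j) = Complex.normSq t * ∑ j, Complex.normSq (b.1 j) := by
    rw [Finset.mul_sum]
    apply Finset.sum_congr rfl
    intro j _
    have : a.1 j = t * b.1 j := by rw [show a.1 = (a : Fin 3 → ℂ) from rfl, h]; simp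
    rw [this, Complex.normSq_mul]
  have hcomp : ∀ k : Fin 3, a.1 k = t * b.1 k := by
    intro k
    rw [show a.1 = (a : Fin 3 → ℂ) from rfl, h]; simp
  have key : ∀ (x y : ℂ), (t*x) * (starRingEnd ℂ) (t*y) / ((Complex.normSq t * ∑ j, Complex.normSq (b.1 j) : ℝ) : ℂ)
      = x * (starRingEnd ℂ) y / ((∑ j, Complex.normSq (b.1 j) : ℝ) : ℂ) := by
    intro x y
    rw [map_mul, Complex.ofReal_mul, ← Complex.mul_conj]
    rw [show t * x * ((starRingEnd ℂ) t * (starRingEnd ℂ) y)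
        = (t * (starRingEnd ℂ) t) * (x * (starRingEnd ℂ) y) by ring]
    exact mul_div_mul_left _ _ htc
  unfold ψ
  rw [hden, hcomp 0, hcomp 1, hcomp 2, key, key]

def Φ : CP2 → ℂ × ℂ := Projectivization.lift ψ ψ_smul

lemma continuous_ψ : Continuous ψ := by
  have hden : ∀ v : {v : Fin 3 → ℂ // v ≠ 0},
      ((∑ j, Complex.normSq (v.1 j) : ℝ) : ℂ) ≠ 0 := by
    intro v
    exact_mod_cast ne_of_gt (sum_normSq_pos v)
  have hc : ∀ i : Fin 3, Continuous (fun v : {v : Fin 3 → ℂ // v ≠ 0} => v.1 i) :=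
    fun i => (continuous_apply i).comp continuous_subtype_val
  have hden_cont : Continuous (fun v : {v : Fin 3 → ℂ // v ≠ 0} =>
      ((∑ j, Complex.normSq (v.1 j) : ℝ) : ℂ)) := by
    apply Complex.continuous_ofReal.comp
    apply continuous_finset_sum
    intro j _
    exact Complex.continuous_normSq.comp (hc j)
  apply Continuous.prodMk
  · exact (((hc 1).mul (Complex.continuous_conj.comp (hc 0)))).div hden_cont hden
  · exact (((hc 2).mul (Complex.continuous_conj.comp (hc 0)))).div hden_cont hden

lemma continuous_Φ : Continuous Φ := by
  unfold Φ Projectivization.lift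
  exact continuous_quot_lift _ continuous_ψ

lemma Φ_mk (v : Fin 3 → ℂ) (hv : v ≠ 0) : Φ (Projectivization.mk ℂ v hv) = ψ ⟨v, hv⟩ :=
  Projectivization.lift_mk ψ ψ_smul v hv

lemma mem_centralSet_iff (P : CP2) :
    P ∈ centralSet ↔ (‖P.rep 1‖ = ‖P.rep 0‖ ∧ ‖P.rep 2‖ = ‖P.rep 0‖) := by
  unfold centralSet
  rw [Set.mem_setOf_eq]
  have hs : ∑ j, ‖P.rep j‖ = ‖P.rep 0‖ + ‖P.rep 1‖ + ‖P.rep 2‖ := by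
    rw [Fin.sum_univ_three]
  constructor
  · intro h
    have h0 := h 0; have h1 := h 1; have h2 := h 2
    rw [hs] at h0 h1 h2
    constructor <;> linarith
  · rintro ⟨h1, h2⟩ i
    rw [hs, h1, h2]
    fin_cases i <;> simp [h1, h2] <;> ring

lemma rep0_ne {P : CP2} (h : P ∈ centralSet) : P.rep 0 ≠ 0 := by
  rw [mem_centralSet_iff] at h
  intro h0
  apply P.rep_nonzero
  funext i
  have hn : ‖P.rep 0‖ = 0 := by rw [h0]; simp
  have e1 : P.rep 1 = 0 := by rw [← norm_eq_zero, h.1, hn]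
  have e2 : P.rep 2 = 0 := by rw [← norm_eq_zero, h.2, hn]
  fin_cases i
  · exact h0
  · exact e1
  · exact e2

lemma rep0_pos {P : CP2} (h : P ∈ centralSet) : 0 < ‖P.rep 0‖ :=
  norm_pos_iff.2 (rep0_ne h)

lemma sum_normSq_rep {P : CP2} (h : P ∈ centralSet) :
    ∑ j, Complex.normSq (P.rep j) = 3 * ‖P.rep 0‖ ^ 2 := by
  rw [mem_centralSet_iff] at h
  rw [Fin.sum_univ_three]
  have e : ∀ z : ℂ, Complex.normSq z = ‖z‖ ^ 2 := by
    intro z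
    rw [Complex.normSq_eq_norm_sq]
  rw [e, e, e, h.1, h.2]
  ring

lemma Φ_rep (P : CP2) : Φ P = ψ ⟨P.rep, P.rep_nonzero⟩ := by
  conv_lhs => rw [← P.mk_rep]
  exact Φ_mk _ _

lemma norm_Φ₁ {P : CP2} (h : P ∈ centralSet) : ‖(3 : ℂ) * (Φ P).1‖ = 1 := by
  have hmem := h
  rw [mem_centralSet_iff] at hmem
  rw [Φ_rep]
  unfold ψ
  simp only [norm_mul, norm_div]
  rw [RCLike.norm_conj]
  rw [sum_normSq_rep h, hmem.1]
  have hc := rep0_pos h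
  rw [Complex.norm_real, Real.norm_eq_abs, _root_.abs_of_pos (by positivity), Complex.norm_ofNat]
  rw [sq]
  field_simp

lemma norm_Φ₂ {P : CP2} (h : P ∈ centralSet) : ‖(3 : ℂ) * (Φ P).2‖ = 1 := by
  have hmem := h
  rw [mem_centralSet_iff] at hmem
  rw [Φ_rep]
  unfold ψ
  simp only [norm_mul, norm_div]
  rw [RCLike.norm_conj]
  rw [sum_normSq_rep h, hmem.2]
  have hc := rep0_pos h
  rw [Complex.norm_real, Real.norm_eq_abs, _root_.abs_of_pos (by positivity), Complex.norm_ofNat]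
  rw [sq]
  field_simp

def centralInv (P : CP2) (h : P ∈ centralSet) : Circ × Circ :=
  (⟨3 * (Φ P).1, mem_sphere_zero_iff_norm.2 (norm_Φ₁ h)⟩,
   ⟨3 * (Φ P).2, mem_sphere_zero_iff_norm.2 (norm_Φ₂ h)⟩)

lemma torusToCP2_mem (w : Circ × Circ) : torusToCP2 w ∈ centralSet := by
  rw [mem_centralSet_iff]
  obtain ⟨a, ha⟩ := exists_smul_eq_mk_rep ℂ (torusVec w) (torusVec_ne w)
  have hrep : ∀ i, (torusToCP2 w).rep i = (a : ℂ) * torusVec w i := by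
    intro i
    rw [show (torusToCP2 w).rep = ((Projectivization.mk ℂ (torusVec w) (torusVec_ne w)).rep)
      from rfl, ← ha]
    rfl
  have hn : ∀ i, ‖torusVec w i‖ = 1 := by
    intro i
    fin_cases i
    · simp [torusVec]
    · simpa [torusVec] using circ_norm w.1
    · simpa [torusVec] using circ_norm w.2
  constructor <;> rw [hrep, hrep, norm_mul, norm_mul, hn, hn]


lemma centralInv_torus (w : Circ × Circ) :
    centralInv (torusToCP2 w) (torusToCP2_mem w) = w := by
  have hΦ : Φ (torusToCP2 w) = ψ ⟨torusVec w, torusVec_ne w⟩ := Φ_mk _ _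
  have hsum : ∑ j, Complex.normSq (torusVec w j) = 3 := by
    rw [Fin.sum_univ_three]
    have e : ∀ z : ℂ, ‖z‖ = 1 → Complex.normSq z = 1 := by
      intro z hz
      rw [Complex.normSq_eq_norm_sq, hz]; norm_num
    simp only [torusVec]
    rw [show (![1, (w.1:ℂ), w.2] 0) = 1 from rfl, show (![1, (w.1:ℂ), w.2] 1) = w.1 from rfl,
      show (![1, (w.1:ℂ), w.2] 2) = w.2 from rfl]
    rw [e _ (circ_norm w.1), e _ (circ_norm w.2)]
    norm_num
  have hψ : ψ ⟨torusVec w, torusVec_ne w⟩ = ((w.1 : ℂ)/3, (w.2 : ℂ)/3) := by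
    unfold ψ
    rw [hsum]
    have h0 : torusVec w 0 = 1 := rfl
    have h1 : torusVec w 1 = w.1 := rfl
    have h2 : torusVec w 2 = w.2 := rfl
    show ((torusVec w 1) * (starRingEnd ℂ) (torusVec w 0) / _,
      (torusVec w 2) * (starRingEnd ℂ) (torusVec w 0) / _) = _
    rw [h0, h1, h2]
    norm_num
  apply Prod.ext <;> apply Subtype.ext
  · show 3 * (Φ (torusToCP2 w)).1 = (w.1 : ℂ)
    rw [hΦ, hψ]
    ring
  · show 3 * (Φ (torusToCP2 w)).2 = (w.2 : ℂ)
    rw [hΦ, hψ]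
    ring

lemma torus_centralInv {P : CP2} (h : P ∈ centralSet) :
    torusToCP2 (centralInv P h) = P := by
  have hr0 : P.rep 0 ≠ 0 := rep0_ne h
  have hΦ : Φ P = ψ ⟨P.rep, P.rep_nonzero⟩ := Φ_rep P
  have hc2 : ((∑ j, Complex.normSq (P.rep j) : ℝ) : ℂ) = 3 * (P.rep 0 * (starRingEnd ℂ) (P.rep 0)) := by
    rw [sum_normSq_rep h, Complex.mul_conj]
    rw [Complex.normSq_eq_norm_sq]
    push_cast
    ring
  have h1 : (3 : ℂ) * (Φ P).1 = P.rep 1 / P.rep 0 := by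
    rw [hΦ]
    show (3:ℂ) * (P.rep 1 * (starRingEnd ℂ) (P.rep 0) / _) = _
    rw [hc2]
    have hconj : (starRingEnd ℂ) (P.rep 0) ≠ 0 := by
      simpa using hr0
    field_simp
  have h2 : (3 : ℂ) * (Φ P).2 = P.rep 2 / P.rep 0 := by
    rw [hΦ]
    show (3:ℂ) * (P.rep 2 * (starRingEnd ℂ) (P.rep 0) / _) = _
    rw [hc2]
    have hconj : (starRingEnd ℂ) (P.rep 0) ≠ 0 := by
      simpa using hr0
    field_simp
  unfold torusToCP2
  conv_rhs => rw [← P.mk_rep]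
  rw [Projectivization.mk_eq_mk_iff']
  refine ⟨(P.rep 0)⁻¹, ?_⟩
  funext i
  fin_cases i
  · show (P.rep 0)⁻¹ * P.rep 0 = torusVec (centralInv P h) 0
    rw [inv_mul_cancel₀ hr0]; rfl
  · show (P.rep 0)⁻¹ * P.rep 1 = torusVec (centralInv P h) 1
    rw [show torusVec (centralInv P h) 1 = (3:ℂ) * (Φ P).1 from rfl, h1]
    field_simp
  · show (P.rep 0)⁻¹ * P.rep 2 = torusVec (centralInv P h) 2
    rw [show torusVec (centralInv P h) 2 = (3:ℂ) * (Φ P).2 from rfl, h2]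
    field_simp

def centralHomeo : (Circ × Circ) ≃ₜ ↥centralSet where
  toFun w := ⟨torusToCP2 w, torusToCP2_mem w⟩
  invFun P := centralInv P.1 P.2
  left_inv w := centralInv_torus w
  right_inv P := Subtype.ext (torus_centralInv P.2)
  continuous_toFun := Continuous.subtype_mk continuous_torusToCP2 _
  continuous_invFun := by
    unfold centralInv
    apply Continuous.prodMk <;> apply Continuous.subtype_mk
    · exact continuous_const.mul ((continuous_Φ.comp continuous_subtype_val).fst)
    · exact continuous_const.mul ((continuous_Φ.comp continuous_subtype_val).snd)

instance : ConnectedSpace Circ :=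
  isConnected_iff_connectedSpace.1
    (isConnected_sphere (by rw [Complex.rank_real_complex]; norm_num) 0 zero_le_one)

lemma centralSet_eq_range : centralSet = Set.range torusToCP2 := by
  ext P
  constructor
  · intro h
    exact ⟨centralInv P h, torus_centralInv h⟩
  · rintro ⟨w, rfl⟩
    exact torusToCP2_mem w

lemma isConnected_centralSet : IsConnected centralSet := by
  rw [centralSet_eq_range]
  exact isConnected_range continuous_torusToCP2


lemma sum_norm_rep_pos (P : CP2) : 0 < ∑ j, ‖P.rep j‖ := by
  obtain ⟨i, hi⟩ : ∃ i, P.rep i ≠ 0 := by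
    by_contra hcon; push_neg at hcon; exact P.rep_nonzero (funext hcon)
  exact Finset.sum_pos' (fun j _ => norm_nonneg _)
    ⟨i, Finset.mem_univ _, norm_pos_iff.2 hi⟩

end

end CentralSurfaceAux

open CentralSurfaceAux in
/-- Formalizable fragment of the minimality of the genus-1 trisection of `ℂP²`
induced by the moment map `μ[z₀:z₁:z₂] = (|z₀|,|z₁|,|z₂|)/Σ|zₖ|`: the central
surface, i.e. the preimage of the barycenter `(1/3,1/3,1/3)` of `Δ²`, is
connected, has the homotopy type of the torus `S¹ × S¹`, and in particular is not
simply connected. -/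
theorem central_surface_of_CP2_is_torus
    (μ : ℙ ℂ (Fin 3 → ℂ) → (Fin 3 → ℝ))
    (hμ : ∀ P : ℙ ℂ (Fin 3 → ℂ), μ P = fun i => ‖P.rep i‖ / ∑ j, ‖P.rep j‖) :
    IsConnected (μ ⁻¹' {fun _ => 1 / 3}) ∧
    Nonempty (ContinuousMap.HomotopyEquiv
      (μ ⁻¹' {fun _ => 1 / 3} : Set (ℙ ℂ (Fin 3 → ℂ)))
      (Metric.sphere (0 : ℂ) 1 × Metric.sphere (0 : ℂ) 1)) ∧
    ¬ SimplyConnectedSpace (μ ⁻¹' {fun _ => 1 / 3} : Set (ℙ ℂ (Fin 3 → ℂ))) := by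
  have hset : μ ⁻¹' {fun _ => 1 / 3} = centralSet := by
    ext P
    simp only [Set.mem_preimage, Set.mem_singleton_iff, hμ P, funext_iff]
    have hpos : 0 < ∑ j, ‖P.rep j‖ := sum_norm_rep_pos P
    unfold centralSet
    rw [Set.mem_setOf_eq]
    constructor
    · intro hh i
      have := hh i
      rw [div_eq_div_iff (ne_of_gt hpos) (by norm_num : (3:ℝ) ≠ 0)] at this
      linarith
    · intro hh i
      rw [div_eq_div_iff (ne_of_gt hpos) (by norm_num : (3:ℝ) ≠ 0)]
      linarith [hh i]
  rw [hset]
  refine ⟨isConnected_centralSet, ⟨centralHomeo.symm.toHomotopyEquiv⟩, ?_⟩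
  intro hSC
  exact torus_not_simplyConnected
    (simplyConnected_of_homotopyEquiv centralHomeo.symm.toHomotopyEquiv hSC)
end
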